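/- arXiv:1201.5176 — 4 statements merged into one kernel-verified Lean document; each statement's English description precedes it below -/
import Mathlib

section
/- Let p₀, p₁, p₂, p₃ be affinely independent points in ℝ³, so that their convex hull is a tetrahedron. Then the facet conv{p₁,p₂,p₃} intersects the union of the other three facets (the star of the opposite vertex p₀), conv{p₀,p₁,p₂} ∪ conv{p₀,p₁,p₃} ∪ conv{p₀,p₂,p₃}, exactly in the union of its three edges: conv{p₁,p₂} ∪ conv{p₁,p₃} ∪ conv{p₂,p₃}. In particular a facet of the tetrahedron meets the star of the opposite vertex in three edges, not in at most two contiguous edges, so the tetrahedron is not spread out. -/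
/-- A facet of a tetrahedron (the convex hull of four affinely independent points
in `ℝ³`) meets the union of the other three facets (the star of the opposite
vertex) exactly in the union of its three edges; in particular the tetrahedron
is not spread out. -/
theorem tetrahedron_facet_meets_opposite_star
    (p : Fin 4 → (Fin 3 → ℝ)) (hp : AffineIndependent ℝ p) :
    convexHull ℝ {p 1, p 2, p 3} ∩
      (convexHull ℝ {p 0, p 1, p 2} ∪ convexHull ℝ {p 0, p 1, p 3} ∪
        convexHull ℝ {p 0, p 2, p 3}) =
    convexHull ℝ {p 1, p 2} ∪ convexHull ℝ {p 1, p 3} ∪ convexHull ℝ {p 2, p 3} := by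
  classical
  have hinj : Function.Injective p := hp.injective
  set S : Finset (Fin 3 → ℝ) := {p 0, p 1, p 2, p 3} with hS
  have hSr : (S : Set (Fin 3 → ℝ)) = Set.range p := by
    ext x
    simp only [hS, Finset.coe_insert, Finset.coe_singleton, Set.mem_insert_iff,
      Set.mem_singleton_iff, Set.mem_range]
    constructor
    · rintro (rfl | rfl | rfl | rfl) <;> exact ⟨_, rfl⟩
    · rintro ⟨i, rfl⟩; fin_cases i <;> simp
  have hSi : AffineIndependent ℝ (fun x : {x // x ∈ S} => (x : Fin 3 → ℝ)) := by
    have h := hp.range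
    rw [← hSr] at h
    exact h
  have key : ∀ t₁ t₂ : Finset (Fin 3 → ℝ), t₁ ⊆ S → t₂ ⊆ S →
      convexHull ℝ (t₁ : Set (Fin 3 → ℝ)) ∩ convexHull ℝ (t₂ : Set (Fin 3 → ℝ)) =
        convexHull ℝ ((t₁ ∩ t₂ : Finset (Fin 3 → ℝ)) : Set (Fin 3 → ℝ)) := by
    intro t₁ t₂ h₁ h₂
    rw [Finset.coe_inter]
    exact (hSi.convexHull_inter h₁ h₂).symm
  have ne : ∀ i j : Fin 4, i ≠ j → p i ≠ p j := fun i j h => fun e => h (hinj e)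
  have h01 := ne 0 1 (by decide); have h02 := ne 0 2 (by decide)
  have h03 := ne 0 3 (by decide); have h12 := ne 1 2 (by decide)
  have h13 := ne 1 3 (by decide); have h23 := ne 2 3 (by decide)
  have e1 : ({p 1, p 2, p 3} : Finset (Fin 3 → ℝ)) ∩ {p 0, p 1, p 2} = {p 1, p 2} := by
    ext x
    simp only [Finset.mem_inter, Finset.mem_insert, Finset.mem_singleton]
    constructor
    · rintro ⟨rfl | rfl | rfl, h⟩ <;> tauto
    · rintro (rfl | rfl) <;> tauto
  have e2 : ({p 1, p 2, p 3} : Finset (Fin 3 → ℝ)) ∩ {p 0, p 1, p 3} = {p 1, p 3} := by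
    ext x
    simp only [Finset.mem_inter, Finset.mem_insert, Finset.mem_singleton]
    constructor
    · rintro ⟨rfl | rfl | rfl, h⟩ <;> tauto
    · rintro (rfl | rfl) <;> tauto
  have e3 : ({p 1, p 2, p 3} : Finset (Fin 3 → ℝ)) ∩ {p 0, p 2, p 3} = {p 2, p 3} := by
    ext x
    simp only [Finset.mem_inter, Finset.mem_insert, Finset.mem_singleton]
    constructor
    · rintro ⟨rfl | rfl | rfl, h⟩ <;> tauto
    · rintro (rfl | rfl) <;> tauto
  have sub1 : ({p 1, p 2, p 3} : Finset (Fin 3 → ℝ)) ⊆ S := by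
    intro x hx; simp only [hS, Finset.mem_insert, Finset.mem_singleton] at hx ⊢; tauto
  have sub2 : ({p 0, p 1, p 2} : Finset (Fin 3 → ℝ)) ⊆ S := by
    intro x hx; simp only [hS, Finset.mem_insert, Finset.mem_singleton] at hx ⊢; tauto
  have sub3 : ({p 0, p 1, p 3} : Finset (Fin 3 → ℝ)) ⊆ S := by
    intro x hx; simp only [hS, Finset.mem_insert, Finset.mem_singleton] at hx ⊢; tauto
  have sub4 : ({p 0, p 2, p 3} : Finset (Fin 3 → ℝ)) ⊆ S := by
    intro x hx; simp only [hS, Finset.mem_insert, Finset.mem_singleton] at hx ⊢; tauto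
  have coe3 : ∀ a b c : Fin 3 → ℝ, ({a, b, c} : Set (Fin 3 → ℝ)) =
      (({a, b, c} : Finset (Fin 3 → ℝ)) : Set (Fin 3 → ℝ)) := by intro a b c; simp
  have coe2 : ∀ a b : Fin 3 → ℝ, ({a, b} : Set (Fin 3 → ℝ)) =
      (({a, b} : Finset (Fin 3 → ℝ)) : Set (Fin 3 → ℝ)) := by intro a b; simp
  rw [coe3 (p 1) (p 2) (p 3), coe3 (p 0) (p 1) (p 2), coe3 (p 0) (p 1) (p 3),
    coe3 (p 0) (p 2) (p 3), coe2 (p 1) (p 2), coe2 (p 1) (p 3), coe2 (p 2) (p 3),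
    Set.inter_union_distrib_left, Set.inter_union_distrib_left,
    key _ _ sub1 sub2, key _ _ sub1 sub3, key _ _ sub1 sub4, e1, e2, e3]
end

section
/- Consider the unit cube [0,1]³ ⊂ ℝ³ with facets F(i,a) = {x ∈ [0,1]³ : x i = a} for i ∈ Fin 3 and a ∈ {0,1}. Let A = F(i,a) be a facet and let v ∈ {0,1}³ be a vertex with v i = 1 − a (so v ∉ A), and let j, k be the two indices other than i. Then the intersection of A with the union of the three facets containing v (namely F(i, 1−a), F(j, v j) and F(k, v k)) equals the union of the two edges {x ∈ [0,1]³ : x i = a, x j = v j} and {x ∈ [0,1]³ : x i = a, x k = v k}, and these two edges share the common vertex w given by w i = a, w j = v j, w k = v k. Hence a facet of the cube meets the star of any vertex not lying on it in exactly two contiguous edges. -/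
/-- The unit cube `[0,1]³ ⊂ ℝ³`. -/
def unitCube : Set (Fin 3 → ℝ) := {x | ∀ i, x i ∈ Set.Icc (0 : ℝ) 1}

/-- The facet of the unit cube where the `i`-th coordinate equals `a`. -/
def cubeFacet (i : Fin 3) (a : ℝ) : Set (Fin 3 → ℝ) := {x ∈ unitCube | x i = a}

/-- A facet `F(i,a)` of the unit cube meets the union of the three facets
containing a vertex `v` with `v i = 1 - a` (the star of `v`) in exactly the
union of the two edges `{x : x i = a, x j = v j}` and `{x : x i = a, x k = v k}`,
and these two edges share the common vertex `w` with `w i = a`, `w j = v j`,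
`w k = v k`. -/
theorem cube_facet_meets_opposite_star (i j k : Fin 3) (a : ℝ)
    (hij : i ≠ j) (hik : i ≠ k) (hjk : j ≠ k)
    (ha : a = 0 ∨ a = 1) (v : Fin 3 → ℝ) (hv : ∀ m, v m = 0 ∨ v m = 1)
    (hvi : v i = 1 - a) :
    (cubeFacet i a ∩ (cubeFacet i (1 - a) ∪ cubeFacet j (v j) ∪ cubeFacet k (v k)) =
      {x ∈ unitCube | x i = a ∧ x j = v j} ∪ {x ∈ unitCube | x i = a ∧ x k = v k}) ∧
    ∀ w : Fin 3 → ℝ, w i = a → w j = v j → w k = v k →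
      {x ∈ unitCube | x i = a ∧ x j = v j} ∩ {x ∈ unitCube | x i = a ∧ x k = v k} = {w} := by
  have hane : a ≠ 1 - a := by rcases ha with h | h <;> simp [h]
  have hcover : ∀ m : Fin 3, m = i ∨ m = j ∨ m = k := by
    intro m
    have h1 := i.isLt; have h2 := j.isLt; have h3 := k.isLt; have h4 := m.isLt
    have e1 : i.val ≠ j.val := fun h => hij (Fin.ext h)
    have e2 : i.val ≠ k.val := fun h => hik (Fin.ext h)
    have e3 : j.val ≠ k.val := fun h => hjk (Fin.ext h)
    have : m.val = i.val ∨ m.val = j.val ∨ m.val = k.val := by omega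
    rcases this with h | h | h
    · exact Or.inl (Fin.ext h)
    · exact Or.inr (Or.inl (Fin.ext h))
    · exact Or.inr (Or.inr (Fin.ext h))
  constructor
  · ext x
    simp only [cubeFacet, Set.mem_inter_iff, Set.mem_union, Set.mem_setOf_eq]
    constructor
    · rintro ⟨⟨hc, hxi⟩, (⟨_, h⟩ | ⟨_, h⟩) | ⟨_, h⟩⟩
      · exact absurd (hxi ▸ h) hane
      · exact Or.inl ⟨hc, hxi, h⟩
      · exact Or.inr ⟨hc, hxi, h⟩
    · rintro (⟨hc, hxi, h⟩ | ⟨hc, hxi, h⟩)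
      · exact ⟨⟨hc, hxi⟩, Or.inl (Or.inr ⟨hc, h⟩)⟩
      · exact ⟨⟨hc, hxi⟩, Or.inr ⟨hc, h⟩⟩
  · intro w hwi hwj hwk
    ext x
    simp only [Set.mem_inter_iff, Set.mem_setOf_eq, Set.mem_singleton_iff]
    constructor
    · rintro ⟨⟨_, hxi, hxj⟩, ⟨_, _, hxk⟩⟩
      funext m
      rcases hcover m with rfl | rfl | rfl
      · rw [hxi, hwi]
      · rw [hxj, hwj]
      · rw [hxk, hwk]
    · rintro rfl
      have hcube : x ∈ unitCube := by
        intro m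
        have hm : x m = 0 ∨ x m = 1 := by
          rcases hcover m with h | h | h
          · rw [h, hwi]; exact ha
          · rw [h, hwj]; exact hv j
          · rw [h, hwk]; exact hv k
        rcases hm with h | h <;> rw [h] <;> constructor <;> norm_num
      exact ⟨⟨hcube, hwi, hwj⟩, hcube, hwi, hwk⟩
end

section
/- The unit cube is spread out: for every facet A = F(i,a) of [0,1]³, every vertex v ∈ {0,1}³, and every nonempty set B of facets of the cube each containing v and with A ∉ B, the intersection A ∩ ⋃B is either empty, a single vertex of the cube, a single edge of the cube, or the union of two edges of the cube sharing a common vertex. -/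
/-- A set is a facet of the unit cube. -/
def IsCubeFacet (S : Set (Fin 3 → ℝ)) : Prop :=
  ∃ i a, (a = 0 ∨ a = 1) ∧ S = cubeFacet i a

/-- A point is a vertex of the unit cube, i.e. lies in `{0,1}³`. -/
def IsCubeVertex (x : Fin 3 → ℝ) : Prop := ∀ m, x m = 0 ∨ x m = 1

/-- A set is an edge of the unit cube, i.e. the intersection of two
non-parallel facets. -/
def IsCubeEdge (E : Set (Fin 3 → ℝ)) : Prop :=
  ∃ i j a b, i ≠ j ∧ (a = 0 ∨ a = 1) ∧ (b = 0 ∨ b = 1) ∧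
    E = cubeFacet i a ∩ cubeFacet j b

lemma vertex_mem_unitCube {x : Fin 3 → ℝ} (hx : IsCubeVertex x) : x ∈ unitCube := by
  intro m
  rcases hx m with h | h <;> norm_num [h]

/-- The unit cube is spread out: for every facet `A = F(i,a)`, every vertex `v`,
and every nonempty set `B` of facets each containing `v` with `A ∉ B` (a fan at
`v`, since every vertex of the cube has valence 3), the intersection `A ∩ ⋃ B`
is empty, a single vertex, a single edge, or the union of two edges sharing a
common vertex. -/
theorem cube_spread_out (i : Fin 3) (a : ℝ) (ha : a = 0 ∨ a = 1)
    (v : Fin 3 → ℝ) (hv : IsCubeVertex v)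
    (B : Set (Set (Fin 3 → ℝ))) (hBne : B.Nonempty)
    (hB : ∀ S ∈ B, IsCubeFacet S ∧ v ∈ S) (hA : cubeFacet i a ∉ B) :
    cubeFacet i a ∩ ⋃₀ B = ∅ ∨
    (∃ x, IsCubeVertex x ∧ cubeFacet i a ∩ ⋃₀ B = {x}) ∨
    (∃ E, IsCubeEdge E ∧ cubeFacet i a ∩ ⋃₀ B = E) ∨
    (∃ E₁ E₂, IsCubeEdge E₁ ∧ IsCubeEdge E₂ ∧ E₁ ≠ E₂ ∧
      (∃ x, IsCubeVertex x ∧ x ∈ E₁ ∩ E₂) ∧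
      cubeFacet i a ∩ ⋃₀ B = E₁ ∪ E₂) := by
  classical
  have hne1 : ∀ n : Fin 3, n + 1 ≠ n := by decide
  have hne2 : ∀ n : Fin 3, n + 2 ≠ n := by decide
  have hne12 : ∀ n : Fin 3, n + 2 ≠ n + 1 := by decide
  have h3 : ∀ n m : Fin 3, m = n ∨ m = n + 1 ∨ m = n + 2 := by decide
  have hBmem : ∀ S ∈ B, ∃ m, S = cubeFacet m (v m) := by
    intro S hS
    obtain ⟨⟨m, b, hb, rfl⟩, hvS⟩ := hB S hS
    exact ⟨m, by rw [← hvS.2]⟩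
  have hmemU : ∀ x, x ∈ cubeFacet i a ∩ ⋃₀ B ↔
      x ∈ unitCube ∧ x i = a ∧ ∃ m, cubeFacet m (v m) ∈ B ∧ x m = v m := by
    intro x
    constructor
    · rintro ⟨⟨hxc, hxi⟩, S, hS, hxS⟩
      obtain ⟨m, rfl⟩ := hBmem S hS
      exact ⟨hxc, hxi, m, hS, hxS.2⟩
    · rintro ⟨hxc, hxi, m, hm, hxm⟩
      exact ⟨⟨hxc, hxi⟩, cubeFacet m (v m), hm, hxc, hxm⟩
  have hia : cubeFacet i (v i) ∈ B → v i ≠ a := by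
    intro hPi hvi
    rw [hvi] at hPi
    exact hA hPi
  by_cases h1 : cubeFacet (i + 1) (v (i + 1)) ∈ B <;>
    by_cases h2 : cubeFacet (i + 2) (v (i + 2)) ∈ B
  · -- both neighboring facets in B: union of two edges
    right; right; right
    refine ⟨cubeFacet i a ∩ cubeFacet (i + 1) (v (i + 1)),
           cubeFacet i a ∩ cubeFacet (i + 2) (v (i + 2)),
           ⟨i, i + 1, a, v (i + 1), (hne1 i).symm, ha, hv _, rfl⟩,
           ⟨i, i + 2, a, v (i + 2), (hne2 i).symm, ha, hv _, rfl⟩, ?_, ?_, ?_⟩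
    · intro heq
      set y : Fin 3 → ℝ := fun m => if m = i then a else if m = i + 1 then v (i + 1) else 1 - v (i + 2) with hy
      have hyv : IsCubeVertex y := by
        intro m
        by_cases hmi : m = i
        · simpa [hy, hmi] using ha
        by_cases hm1 : m = i + 1
        · simpa [hy, hmi, hm1] using hv (i + 1)
        · rcases hv (i + 2) with h | h <;> simp [hy, hmi, hm1, h]
      have hy1 : y ∈ cubeFacet i a ∩ cubeFacet (i + 1) (v (i + 1)) := by
        refine ⟨⟨vertex_mem_unitCube hyv, ?_⟩, vertex_mem_unitCube hyv, ?_⟩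
        · simp [hy]
        · simp [hy, hne1 i]
      rw [heq] at hy1
      have hv2 := hy1.2.2
      rw [hy] at hv2
      simp only [hne2 i, hne12 i, if_false, if_neg] at hv2
      rcases hv (i + 2) with h | h <;> rw [h] at hv2 <;> norm_num at hv2
    · set x : Fin 3 → ℝ := fun m => if m = i then a else v m with hx
      have hxv : IsCubeVertex x := by
        intro m
        by_cases hmi : m = i
        · simpa [hx, hmi] using ha
        · simpa [hx, hmi] using hv m
      exact ⟨x, hxv, ⟨⟨vertex_mem_unitCube hxv, by simp [hx]⟩,
              vertex_mem_unitCube hxv, by simp [hx, hne1 i]⟩,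
             ⟨vertex_mem_unitCube hxv, by simp [hx]⟩,
              vertex_mem_unitCube hxv, by simp [hx, hne2 i]⟩
    · ext x
      rw [hmemU]
      constructor
      · rintro ⟨hxc, hxi, m, hm, hxm⟩
        rcases h3 i m with rfl | rfl | rfl
        · exact absurd (hxm.symm.trans hxi) (hia hm)
        · exact Or.inl ⟨⟨hxc, hxi⟩, hxc, hxm⟩
        · exact Or.inr ⟨⟨hxc, hxi⟩, hxc, hxm⟩
      · rintro (⟨⟨hxc, hxi⟩, _, hxm⟩ | ⟨⟨hxc, hxi⟩, _, hxm⟩)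
        · exact ⟨hxc, hxi, i + 1, h1, hxm⟩
        · exact ⟨hxc, hxi, i + 2, h2, hxm⟩
  · -- only i+1 facet: single edge
    right; right; left
    refine ⟨cubeFacet i a ∩ cubeFacet (i + 1) (v (i + 1)),
      ⟨i, i + 1, a, v (i + 1), (hne1 i).symm, ha, hv _, rfl⟩, ?_⟩
    ext x
    rw [hmemU]
    constructor
    · rintro ⟨hxc, hxi, m, hm, hxm⟩
      rcases h3 i m with rfl | rfl | rfl
      · exact absurd (hxm.symm.trans hxi) (hia hm)
      · exact ⟨⟨hxc, hxi⟩, hxc, hxm⟩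
      · exact absurd hm h2
    · rintro ⟨⟨hxc, hxi⟩, _, hxm⟩
      exact ⟨hxc, hxi, i + 1, h1, hxm⟩
  · -- only i+2 facet: single edge
    right; right; left
    refine ⟨cubeFacet i a ∩ cubeFacet (i + 2) (v (i + 2)),
      ⟨i, i + 2, a, v (i + 2), (hne2 i).symm, ha, hv _, rfl⟩, ?_⟩
    ext x
    rw [hmemU]
    constructor
    · rintro ⟨hxc, hxi, m, hm, hxm⟩
      rcases h3 i m with rfl | rfl | rfl
      · exact absurd (hxm.symm.trans hxi) (hia hm)
      · exact absurd hm h1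
      · exact ⟨⟨hxc, hxi⟩, hxc, hxm⟩
    · rintro ⟨⟨hxc, hxi⟩, _, hxm⟩
      exact ⟨hxc, hxi, i + 2, h2, hxm⟩
  · -- neither: intersection is empty
    left
    rw [Set.eq_empty_iff_forall_notMem]
    intro x hx
    rw [hmemU] at hx
    obtain ⟨hxc, hxi, m, hm, hxm⟩ := hx
    rcases h3 i m with rfl | rfl | rfl
    · exact (hia hm) (hxm.symm.trans hxi)
    · exact h1 hm
    · exact h2 hm
end

section
/- Let O = conv{±e₀, ±e₁, ±e₂} ⊂ ℝ³ be the regular octahedron with facets F_ε as above. Fix k ∈ Fin 3 and σ ∈ {−1, 1}, and let v = σ • e_k, a vertex of O; the facets containing v are exactly the four F_ε with ε k = σ. Then for any facet F_δ with δ k = −σ (so v ∉ F_δ), the intersection of F_δ with the union of the four facets containing v equals the single edge conv{δ i • eᵢ : i ∈ Fin 3, i ≠ k} of F_δ. Hence a facet of the octahedron meets the star of any vertex not lying on it in exactly one edge. -/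
/-- The standard basis vectors of `ℝ³`. -/
def e (i : Fin 3) : Fin 3 → ℝ := Pi.single i 1

/-- The regular octahedron `conv{±e₀, ±e₁, ±e₂} ⊂ ℝ³`. -/
def octa : Set (Fin 3 → ℝ) :=
  convexHull ℝ {x | ∃ (i : Fin 3) (s : ℝ), (s = 1 ∨ s = -1) ∧ x = s • e i}

/-- The facet of the octahedron corresponding to a sign vector `ε`. -/
def octaFacet (ε : Fin 3 → ℝ) : Set (Fin 3 → ℝ) :=
  {x ∈ octa | ∑ i, ε i * x i = 1}

/-- `ε` is a sign vector: each coordinate is `1` or `-1`. -/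
def IsSign (ε : Fin 3 → ℝ) : Prop := ∀ i, ε i = 1 ∨ ε i = -1

lemma abs_of_sign {s : ℝ} (hs : s = 1 ∨ s = -1) : |s| = 1 := by
  rcases hs with h | h <;> simp [h]

lemma sum_smul_e (x : Fin 3 → ℝ) : ∑ i, x i • e i = x := by
  funext j
  simp [e, Finset.sum_apply, Pi.single_apply, mul_ite]

lemma octa_subset_ball : octa ⊆ {x | ∑ i, |x i| ≤ 1} := by
  apply convexHull_min
  · rintro x ⟨i, s, hs, rfl⟩
    have h1 : ∀ j, |(s • e i) j| = if j = i then 1 else 0 := by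
      intro j
      simp only [Pi.smul_apply, smul_eq_mul, e, Pi.single_apply, mul_ite, mul_one, mul_zero]
      split <;> simp [abs_of_sign hs]
    simp only [Set.mem_setOf_eq, h1]
    simp
  · intro x hx y hy a b ha hb hab
    simp only [Set.mem_setOf_eq] at *
    calc ∑ i, |(a • x + b • y) i| ≤ ∑ i, (a * |x i| + b * |y i|) := by
          apply Finset.sum_le_sum
          intro i _
          simpa [abs_mul, abs_of_nonneg ha, abs_of_nonneg hb] using abs_add_le (a * x i) (b * y i)
      _ = a * ∑ i, |x i| + b * ∑ i, |y i| := by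
          rw [Finset.sum_add_distrib, Finset.mul_sum, Finset.mul_sum]
      _ ≤ a * 1 + b * 1 := by gcongr
      _ = 1 := by linarith

/-- A facet `F_δ` of the octahedron meets the union of the four facets
containing the vertex `v = σ • e_k` not lying on it (i.e. with `δ k = -σ`) in
exactly the single edge `conv{δ i • eᵢ : i ≠ k}` of `F_δ`: a facet meets the
star of a vertex not lying on it in exactly one edge. -/
theorem octa_facet_meets_opposite_star (k : Fin 3) (σ : ℝ) (hσ : σ = 1 ∨ σ = -1)
    (δ : Fin 3 → ℝ) (hδ : IsSign δ) (hδk : δ k = -σ) :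
    octaFacet δ ∩
      ⋃₀ {S | ∃ ε : Fin 3 → ℝ, IsSign ε ∧ ε k = σ ∧ S = octaFacet ε} =
    convexHull ℝ ((fun i => δ i • e i) '' {i | i ≠ k}) := by
  have hσ0 : σ ≠ 0 := by rcases hσ with h | h <;> simp [h]
  apply Set.Subset.antisymm
  · rintro x ⟨⟨hxO, hxδ⟩, S, ⟨ε, hε, hεk, rfl⟩, hxO', hxε⟩
    have hball := octa_subset_ball hxO
    simp only [Set.mem_setOf_eq] at hball
    have hle : ∀ i ∈ Finset.univ, δ i * x i ≤ |x i| := by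
      intro i _
      calc δ i * x i ≤ |δ i * x i| := le_abs_self _
        _ = |x i| := by rw [abs_mul, abs_of_sign (hδ i), one_mul]
    have habs : ∑ i, |x i| = 1 :=
      le_antisymm hball (hxδ ▸ Finset.sum_le_sum hle)
    have heq : ∀ i ∈ Finset.univ, δ i * x i = |x i| :=
      (Finset.sum_eq_sum_iff_of_le hle).mp (by rw [hxδ, habs])
    have hle' : ∀ i ∈ Finset.univ, ε i * x i ≤ δ i * x i := by
      intro i _
      rw [heq i (Finset.mem_univ i)]
      calc ε i * x i ≤ |ε i * x i| := le_abs_self _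
        _ = |x i| := by rw [abs_mul, abs_of_sign (hε i), one_mul]
    have heq' : ∀ i ∈ Finset.univ, ε i * x i = δ i * x i :=
      (Finset.sum_eq_sum_iff_of_le hle').mp (by rw [hxδ, hxε])
    have hxk : x k = 0 := by
      have h := heq' k (Finset.mem_univ k)
      rw [hεk, hδk] at h
      have h2 : 2 * (σ * x k) = 0 := by linear_combination h
      have h3 : σ * x k = 0 := by linarith
      exact (mul_eq_zero.mp h3).resolve_left hσ0
    have hnn : ∀ i, 0 ≤ δ i * x i := fun i =>
      (heq i (Finset.mem_univ i)) ▸ abs_nonneg (x i)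
    have hsum : ∑ i ∈ Finset.univ.erase k, δ i * x i = 1 := by
      rw [Finset.sum_erase _ (by rw [hxk, mul_zero])]
      exact hxδ
    have hx_eq : x = ∑ i ∈ Finset.univ.erase k, (δ i * x i) • (δ i • e i) := by
      have h1 : ∀ i, (δ i * x i) • (δ i • e i) = x i • e i := by
        intro i
        rw [smul_smul]
        congr 1
        rcases hδ i with h | h <;> rw [h] <;> ring
      calc x = ∑ i, x i • e i := (sum_smul_e x).symm
        _ = ∑ i ∈ Finset.univ.erase k, x i • e i :=
            (Finset.sum_erase _ (by rw [hxk, zero_smul])).symm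
        _ = ∑ i ∈ Finset.univ.erase k, (δ i * x i) • (δ i • e i) := by
            simp only [h1]
    have hmem := Finset.centerMass_mem_convexHull (t := Finset.univ.erase k)
      (w := fun i => δ i * x i) (fun i _ => hnn i) (by rw [hsum]; norm_num)
      (z := fun i => δ i • e i)
      (s := (fun i => δ i • e i) '' {i | i ≠ k})
      (fun i hi => ⟨i, (Finset.mem_erase.mp hi).1, rfl⟩)
    rwa [Finset.centerMass_eq_of_sum_1 _ _ hsum, ← hx_eq] at hmem
  · set ε := Function.update δ k σ with hε_def
    have hεsign : IsSign ε := by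
      intro i
      by_cases h : i = k
      · subst h; simpa [hε_def] using hσ
      · simpa [hε_def, Function.update_of_ne h] using hδ i
    have hεk : ε k = σ := by simp [hε_def]
    have key : ∀ γ : Fin 3 → ℝ, IsSign γ → (∀ i, i ≠ k → γ i = δ i) →
        convexHull ℝ ((fun i => δ i • e i) '' {i | i ≠ k}) ⊆ octaFacet γ := by
      intro γ hγ hγδ
      apply convexHull_min
      · rintro y ⟨i, hi, rfl⟩
        have hgen : δ i • e i ∈
            ({x | ∃ (i : Fin 3) (s : ℝ), (s = 1 ∨ s = -1) ∧ x = s • e i} :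
              Set (Fin 3 → ℝ)) := ⟨i, δ i, hδ i, rfl⟩
        refine ⟨subset_convexHull ℝ _ hgen, ?_⟩
        have h1 : ∀ j, γ j * (δ i • e i) j = if j = i then γ i * δ i else 0 := by
          intro j
          simp only [Pi.smul_apply, smul_eq_mul, e, Pi.single_apply, mul_ite, mul_one, mul_zero]
          split
          · rename_i hj; subst hj; ring
          · rfl
        simp only [h1, Finset.sum_ite_eq' Finset.univ i, Finset.mem_univ, if_true]
        rw [hγδ i hi]
        rcases hδ i with h | h <;> rw [h] <;> norm_num
      · intro x hx y hy a b ha hb hab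
        refine ⟨(convex_convexHull ℝ _) hx.1 hy.1 ha hb hab, ?_⟩
        have : ∑ j, γ j * (a • x + b • y) j
            = a * ∑ j, γ j * x j + b * ∑ j, γ j * y j := by
          rw [Finset.mul_sum, Finset.mul_sum, ← Finset.sum_add_distrib]
          apply Finset.sum_congr rfl
          intro j _
          simp only [Pi.add_apply, Pi.smul_apply, smul_eq_mul]
          ring
        rw [this, hx.2, hy.2]
        linarith
    intro x hx
    exact ⟨key δ hδ (fun i _ => rfl) hx,
      octaFacet ε, ⟨ε, hεsign, hεk, rfl⟩, key ε hεsign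
        (fun i hi => Function.update_of_ne hi _ _) hx⟩
end
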